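/- arXiv:math-ph/0312058 — 2 statements merged into one kernel-verified Lean document; each statement's English description precedes it below -/
import Mathlib

section
/- Let A be a commutative ℚ-algebra with derivation d, let N ≥ 1 and k ≥ 1, and let z ∈ A[w,w⁻¹] have support contained in {−N, −N+1, …, 0, 1}. Set H_k := (z^k)₊ + (1/2)·(z^k)₀. Then the Lax–Poisson bracket {H_k, z} has support contained in {−N, …, 1}; i.e., the t_k-flows of the 2dToda hierarchy preserve the polynomial reduction of z. -/
open LaurentPolynomial

/-- The derivation `d : A → A` extended coefficientwise to Laurent polynomials
(so that `d w = 0`). -/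
noncomputable def dmap {A : Type*} [CommRing A] (d : A → A) (f : LaurentPolynomial A) :
    LaurentPolynomial A :=
  f.coeff.sum fun n a => C (d a) * T n

/-- The formal derivative `∂_w` on Laurent polynomials. -/
noncomputable def wderiv {A : Type*} [CommRing A] (f : LaurentPolynomial A) :
    LaurentPolynomial A :=
  f.coeff.sum fun n a => C (n • a) * T (n - 1)

/-- The Lax–Poisson bracket `{f,g} = w·(∂_w f)·(d g) − w·(d f)·(∂_w g)`. -/
noncomputable def lax {A : Type*} [CommRing A] (d : A → A) (f g : LaurentPolynomial A) :
    LaurentPolynomial A :=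
  T 1 * wderiv f * dmap d g - T 1 * dmap d f * wderiv g

/-- `f₊`, the strictly positive-degree part of a Laurent polynomial. -/
noncomputable def posPart {A : Type*} [CommRing A] (f : LaurentPolynomial A) :
    LaurentPolynomial A :=
  f.coeff.sum fun n a => if 0 < n then C a * T n else 0

/-- `f₋`, the strictly negative-degree part of a Laurent polynomial. -/
noncomputable def negPart {A : Type*} [CommRing A] (f : LaurentPolynomial A) :
    LaurentPolynomial A :=
  f.coeff.sum fun n a => if n < 0 then C a * T n else 0

/-
The bracket is alternating and a derivation in its first argument, so `{z^k, z} = 0` and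
hence `{H_k, z} = -{z^k - H_k, z}`, where `H_k` is supported in `[0, k]` and `z^k - H_k` in
`[-N k, 0]`. Since `{f, g}` is supported in `[a + c, b + e]` when `f` and `g` are supported in
`[a, b]` and `[c, e]`, the first form of the bracket bounds its support below by `-N`, the
second above by `1`.
-/

open Finset Pointwise

section Leibniz

variable {A : Type*} [CommRing A]

lemma dmap_eq_sum_single (d : A → A) (f : LaurentPolynomial A) :
    dmap d f = f.coeff.sum fun n a => AddMonoidAlgebra.single n (d a) := by
  simp only [dmap, single_eq_C_mul_T]

lemma wderiv_eq_sum_single (f : LaurentPolynomial A) :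
    wderiv f = f.coeff.sum fun n a => AddMonoidAlgebra.single (n - 1) (n • a) := by
  simp only [wderiv, single_eq_C_mul_T]

@[simp]
lemma dmap_zero (d : A → A) : dmap d (0 : LaurentPolynomial A) = 0 :=
  Finsupp.sum_zero_index

@[simp]
lemma wderiv_zero : wderiv (0 : LaurentPolynomial A) = 0 :=
  Finsupp.sum_zero_index

lemma wderiv_single (n : ℤ) (a : A) :
    wderiv (AddMonoidAlgebra.single n a : LaurentPolynomial A) =
      AddMonoidAlgebra.single (n - 1) (n • a) := by
  rw [wderiv_eq_sum_single, AddMonoidAlgebra.coeff_single]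
  exact Finsupp.sum_single_index (by rw [smul_zero, AddMonoidAlgebra.single_zero])

lemma wderiv_add (f g : LaurentPolynomial A) : wderiv (f + g) = wderiv f + wderiv g := by
  simp only [wderiv_eq_sum_single, AddMonoidAlgebra.coeff_add]
  refine Finsupp.sum_add_index' (fun n => ?_) fun n a b => ?_
  · rw [smul_zero, AddMonoidAlgebra.single_zero]
  · rw [smul_add, AddMonoidAlgebra.single_add]

lemma wderiv_mul (f g : LaurentPolynomial A) : wderiv (f * g) = f * wderiv g + wderiv f * g := by
  induction f using AddMonoidAlgebra.induction_linear with
  | zero => simp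
  | add f₁ f₂ h₁ h₂ => rw [add_mul, wderiv_add, h₁, h₂, wderiv_add]; ring
  | single m a =>
    induction g using AddMonoidAlgebra.induction_linear with
    | zero => simp
    | add g₁ g₂ h₁ h₂ => rw [mul_add, wderiv_add, h₁, h₂, wderiv_add]; ring
    | single n b =>
      simp only [AddMonoidAlgebra.single_mul_single, wderiv_single]
      rw [show m + (n - 1) = m + n - 1 by ring, show m - 1 + n = m + n - 1 by ring,
        ← AddMonoidAlgebra.single_add]
      congr 1
      rw [add_smul, mul_smul_comm, smul_mul_assoc, add_comm]

lemma lax_self (d : A → A) (f : LaurentPolynomial A) : lax d f f = 0 := by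
  rw [lax]
  ring

variable {d : A → A} (hd_add : ∀ a b : A, d (a + b) = d a + d b)
  (hd_mul : ∀ a b : A, d (a * b) = a * d b + d a * b)
include hd_add

lemma dmap_single (n : ℤ) (a : A) :
    dmap d (AddMonoidAlgebra.single n a : LaurentPolynomial A) =
      AddMonoidAlgebra.single n (d a) := by
  have hd_zero : d 0 = 0 := by simpa using (hd_add 0 0).symm
  rw [dmap_eq_sum_single, AddMonoidAlgebra.coeff_single]
  exact Finsupp.sum_single_index (by rw [hd_zero, AddMonoidAlgebra.single_zero])

lemma dmap_add (f g : LaurentPolynomial A) : dmap d (f + g) = dmap d f + dmap d g := by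
  have hd_zero : d 0 = 0 := by simpa using (hd_add 0 0).symm
  simp only [dmap_eq_sum_single, AddMonoidAlgebra.coeff_add]
  refine Finsupp.sum_add_index' (fun n => ?_) fun n a b => ?_
  · rw [hd_zero, AddMonoidAlgebra.single_zero]
  · rw [hd_add, AddMonoidAlgebra.single_add]

lemma lax_add_left (f g h : LaurentPolynomial A) : lax d (f + g) h = lax d f h + lax d g h := by
  simp only [lax, dmap_add hd_add, wderiv_add]
  ring

include hd_mul

lemma dmap_mul (f g : LaurentPolynomial A) : dmap d (f * g) = f * dmap d g + dmap d f * g := by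
  induction f using AddMonoidAlgebra.induction_linear with
  | zero => simp
  | add f₁ f₂ h₁ h₂ => rw [add_mul, dmap_add hd_add, h₁, h₂, dmap_add hd_add]; ring
  | single m a =>
    induction g using AddMonoidAlgebra.induction_linear with
    | zero => simp
    | add g₁ g₂ h₁ h₂ => rw [mul_add, dmap_add hd_add, h₁, h₂, dmap_add hd_add]; ring
    | single n b =>
      simp only [AddMonoidAlgebra.single_mul_single, dmap_single hd_add, hd_mul,
        AddMonoidAlgebra.single_add]

lemma lax_mul_left (f g h : LaurentPolynomial A) :
    lax d (f * g) h = f * lax d g h + g * lax d f h := by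
  simp only [lax, dmap_mul hd_add hd_mul, wderiv_mul]
  ring

lemma lax_one_left (h : LaurentPolynomial A) : lax d 1 h = 0 := by
  have hd_one : d 1 = 0 := by simpa using hd_mul 1 1
  simp only [lax, AddMonoidAlgebra.one_def, wderiv_single, dmap_single hd_add, hd_one,
    zero_smul, AddMonoidAlgebra.single_zero]
  ring

lemma lax_pow_left_self (k : ℕ) (z : LaurentPolynomial A) : lax d (z ^ k) z = 0 := by
  induction k with
  | zero => rw [pow_zero, lax_one_left hd_add hd_mul]
  | succ k ih =>
    rw [pow_succ, lax_mul_left hd_add hd_mul, ih, lax_self, mul_zero, mul_zero, add_zero]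

end Leibniz

section Support

variable {A : Type*} [CommRing A]

lemma support_dmap_subset (d : A → A) (f : LaurentPolynomial A) :
    (dmap d f).coeff.support ⊆ f.coeff.support := by
  rw [dmap_eq_sum_single, AddMonoidAlgebra.coeff_finsuppSum]
  refine Finsupp.support_sum.trans (biUnion_subset.2 fun n hn => ?_)
  exact Finsupp.support_single_subset.trans (singleton_subset_iff.2 hn)

lemma support_wderiv_subset_Icc {f : LaurentPolynomial A} {a b : ℤ}
    (hf : f.coeff.support ⊆ Icc a b) : (wderiv f).coeff.support ⊆ Icc (a - 1) (b - 1) := by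
  rw [wderiv_eq_sum_single, AddMonoidAlgebra.coeff_finsuppSum]
  refine Finsupp.support_sum.trans (biUnion_subset.2 fun n hn => ?_)
  have hn' := mem_Icc.1 (hf hn)
  exact Finsupp.support_single_subset.trans
    (singleton_subset_iff.2 (mem_Icc.2 ⟨by omega, by omega⟩))

lemma support_mul_subset_Icc {f g : LaurentPolynomial A} {a b c e : ℤ}
    (hf : f.coeff.support ⊆ Icc a b) (hg : g.coeff.support ⊆ Icc c e) :
    (f * g).coeff.support ⊆ Icc (a + c) (b + e) := by
  classical
  exact (AddMonoidAlgebra.support_coeff_mul_subset f g).trans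
    ((add_subset_add hf hg).trans (Icc_add_Icc_subset a b c e))

lemma support_pow_subset_Icc {z : LaurentPolynomial A} {a b : ℤ}
    (hz : z.coeff.support ⊆ Icc a b) (k : ℕ) :
    (z ^ k).coeff.support ⊆ Icc (k * a) (k * b) := by
  induction k with
  | zero =>
    rw [pow_zero, ← T_zero, Nat.cast_zero, zero_mul, zero_mul, Icc_self]
    exact Finsupp.support_single_subset
  | succ k ih =>
    rw [pow_succ, Nat.cast_succ, add_one_mul, add_one_mul]
    exact support_mul_subset_Icc ih hz

lemma support_lax_subset_Icc (d : A → A) {f g : LaurentPolynomial A} {a b c e : ℤ}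
    (hf : f.coeff.support ⊆ Icc a b) (hg : g.coeff.support ⊆ Icc c e) :
    (lax d f g).coeff.support ⊆ Icc (a + c) (b + e) := by
  classical
  have hT : (T 1 : LaurentPolynomial A).coeff.support ⊆ Icc 1 1 :=
    Icc_self (1 : ℤ) ▸ Finsupp.support_single_subset
  have h₁ := support_mul_subset_Icc (support_mul_subset_Icc hT (support_wderiv_subset_Icc hf))
    ((support_dmap_subset d g).trans hg)
  have h₂ := support_mul_subset_Icc
    (support_mul_subset_Icc hT ((support_dmap_subset d f).trans hf)) (support_wderiv_subset_Icc hg)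
  rw [lax, AddMonoidAlgebra.coeff_sub]
  refine Finsupp.support_sub.trans (union_subset (h₁.trans ?_) (h₂.trans ?_)) <;>
    exact Icc_subset_Icc (by omega) (by omega)

lemma coeff_posPart (f : LaurentPolynomial A) (n : ℤ) :
    (posPart f).coeff n = if 0 < n then f.coeff n else 0 := by
  classical
  have hterm : ∀ m a, (if 0 < m then C a * T m else 0 : LaurentPolynomial A).coeff n =
      if m = n then (if 0 < n then a else 0) else 0 := by
    intro m a
    split_ifs <;> simp_all [← single_eq_C_mul_T]
  rw [_root_.posPart, AddMonoidAlgebra.coeff_finsuppSum, Finsupp.sum_apply]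
  simp only [hterm, Finsupp.sum_ite_eq']
  split_ifs <;> simp_all

lemma coeff_posPart_add_C (f : LaurentPolynomial A) (c : A) (n : ℤ) :
    (posPart f + C c).coeff n = if 0 < n then f.coeff n else if n = 0 then c else 0 := by
  rw [AddMonoidAlgebra.coeff_add, Finsupp.add_apply, coeff_posPart, C_apply]
  split_ifs <;> first | omega | simp

lemma support_posPart_add_C_subset_Icc {f : LaurentPolynomial A} {a b : ℤ}
    (hf : f.coeff.support ⊆ Icc a b) (hb : 0 ≤ b) (c : A) :
    (posPart f + C c).coeff.support ⊆ Icc 0 b := by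
  intro n hn
  rw [Finsupp.mem_support_iff, coeff_posPart_add_C] at hn
  split_ifs at hn with hpos hzero
  · exact mem_Icc.2 ⟨hpos.le, (mem_Icc.1 (hf (Finsupp.mem_support_iff.2 hn))).2⟩
  · exact mem_Icc.2 ⟨hzero.ge, hzero ▸ hb⟩
  · exact absurd rfl hn

lemma support_sub_posPart_add_C_subset_Icc {f : LaurentPolynomial A} {a b : ℤ}
    (hf : f.coeff.support ⊆ Icc a b) (ha : a ≤ 0) (c : A) :
    (f - (posPart f + C c)).coeff.support ⊆ Icc a 0 := by
  intro n hn
  rw [Finsupp.mem_support_iff, AddMonoidAlgebra.coeff_sub, Finsupp.sub_apply,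
    coeff_posPart_add_C] at hn
  split_ifs at hn with hpos hzero
  · exact absurd (sub_self _) hn
  · exact mem_Icc.2 ⟨hzero ▸ ha, hzero.le⟩
  · rw [sub_zero] at hn
    exact mem_Icc.2 ⟨(mem_Icc.1 (hf (Finsupp.mem_support_iff.2 hn))).1, not_lt.1 hpos⟩

end Support

theorem t_flow_preserves_poly_reduction_general {A : Type*} [CommRing A] [Algebra ℚ A]
    (d : A → A)
    (hd_add : ∀ a b : A, d (a + b) = d a + d b)
    (hd_mul : ∀ a b : A, d (a * b) = a * d b + d a * b)
    (N k : ℕ)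
    (z : LaurentPolynomial A)
    (hz : z.coeff.support ⊆ Finset.Icc (-(N : ℤ)) 1)
    (Hk : LaurentPolynomial A)
    (hHk : Hk = posPart (z ^ k) + C ((1/2 : ℚ) • ((z ^ k).coeff (0 : ℤ)))) :
    (lax d Hk z).coeff.support ⊆ Finset.Icc (-(N : ℤ)) 1 := by
  have hpow := support_pow_subset_Icc hz k
  have hH : Hk.coeff.support ⊆ Icc 0 (k * 1) :=
    hHk ▸ support_posPart_add_C_subset_Icc hpow (by positivity) _
  have hrest : (z ^ k - Hk).coeff.support ⊆ Icc (k * -(N : ℤ)) 0 :=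
    hHk ▸ support_sub_posPart_add_C_subset_Icc hpow (by nlinarith) _
  have hsplit : lax d Hk z = -lax d (z ^ k - Hk) z := by
    rw [eq_neg_iff_add_eq_zero, ← lax_add_left hd_add, add_sub_cancel,
      lax_pow_left_self hd_add hd_mul]
  intro n hn
  have hlow := mem_Icc.1 (support_lax_subset_Icc d hH hz hn)
  rw [hsplit, AddMonoidAlgebra.coeff_neg, Finsupp.support_neg] at hn
  have hhigh := mem_Icc.1 (support_lax_subset_Icc d hrest hz hn)
  exact mem_Icc.2 ⟨by omega, by omega⟩

/-- the `t_k`-flows of the 2dToda hierarchy preserve the polynomial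
reduction of `z`: if `z` has support in `{−N,…,1}` and
`H_k = (z^k)₊ + (1/2)(z^k)₀` then `{H_k, z}` has support in `{−N,…,1}`. -/
theorem t_flow_preserves_poly_reduction {A : Type*} [CommRing A] [Algebra ℚ A]
    (d : A → A)
    (hd_add : ∀ a b : A, d (a + b) = d a + d b)
    (hd_mul : ∀ a b : A, d (a * b) = a * d b + d a * b)
    (N k : ℕ) (hN : 1 ≤ N) (hk : 1 ≤ k)
    (z : LaurentPolynomial A)
    (hz : z.coeff.support ⊆ Finset.Icc (-(N : ℤ)) 1)
    (Hk : LaurentPolynomial A)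
    (hHk : Hk = posPart (z ^ k) + C ((1/2 : ℚ) • ((z ^ k).coeff (0 : ℤ)))) :
    (lax d Hk z).coeff.support ⊆ Finset.Icc (-(N : ℤ)) 1 :=
  t_flow_preserves_poly_reduction_general d hd_add hd_mul N k z hz Hk hHk
end

section
/- Let A be an integral domain that is a ℚ-algebra, with derivation d, and let N ≥ 1. Let z, z̄ ∈ A[w,w⁻¹] have supports contained in {−N, …, 1} and {−1, …, N} respectively, with the coefficient of w¹ in z nonzero and the coefficient of w⁻¹ in z̄ nonzero. Set H_{N+1} := (z^{N+1})₊ + (1/2)·(z^{N+1})₀ and H̄_{N+1} := (z̄^{N+1})₋ + (1/2)·(z̄^{N+1})₀. If {H̄_{N+1}, z} has support contained in {i ∈ ℤ : i ≥ −N} and {H_{N+1}, z̄} has support contained in {i ∈ ℤ : i ≤ N}, then {z, z̄} has support contained in {0}, i.e. {z, z̄} is independent of w. (This is the key step showing the string equation is a necessary condition for the consistency of the polynomial reduction with the Toda flows.) -/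
open LaurentPolynomial

/-!
Since `{·, z}` is a derivation, `{z̄^{N+1}, z} = (N+1) z̄^N {z̄, z}`. In a domain of characteristic
zero the lowest term of this product is `(N+1) z̄₋₁^N` times the lowest term of `{z̄, z}`, shifted
down by `N`. On the other hand `z̄^{N+1} - H̄_{N+1}` has no negative powers, so
`{z̄^{N+1}, z} = {H̄_{N+1}, z} + {z̄^{N+1} - H̄_{N+1}, z}` has no powers below `w^{-N}`. Hence
`{z, z̄}` has no negative powers. The involution `w ↦ w⁻¹` reverses the sign of the bracket and
exchanges the roles of `z` and `z̄`, so the same argument rules out positive powers.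
-/

open scoped Pointwise

namespace LaurentPolynomial
variable {A : Type*} [CommRing A]

theorem coeff_sum_C_mul_T (f : LaurentPolynomial A) (φ : ℤ → A → A) (hφ : ∀ n, φ n 0 = 0)
    (t m : ℤ) :
    (f.coeff.sum fun n a => C (φ n a) * T (n + t)).coeff (m + t) = φ m (f.coeff m) := by
  classical
  simp only [← single_eq_C_mul_T, AddMonoidAlgebra.coeff_finsuppSum, AddMonoidAlgebra.coeff_single,
    Finsupp.sum_apply]
  rw [Finsupp.sum, Finset.sum_eq_single m]
  · simp
  · intro n _ hn; simp [hn]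
  · intro hm; simp_all

theorem coeff_dmap (d : A → A) (hd0 : d 0 = 0) (f : LaurentPolynomial A) (m : ℤ) :
    (dmap d f).coeff m = d (f.coeff m) := by
  have := coeff_sum_C_mul_T f (fun _ => d) (fun _ => hd0) 0 m
  simp only [add_zero] at this
  exact this

theorem coeff_wderiv (f : LaurentPolynomial A) (m : ℤ) :
    (wderiv f).coeff (m - 1) = m • f.coeff m := by
  have := coeff_sum_C_mul_T f (· • ·) smul_zero (-1) m
  simp only [← sub_eq_add_neg] at this
  exact this

theorem coeff_posPart (f : LaurentPolynomial A) (m : ℤ) :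
    (posPart f).coeff m = if 0 < m then f.coeff m else 0 := by
  have := coeff_sum_C_mul_T f (fun n a => if 0 < n then a else 0) (fun _ => ite_self 0) 0 m
  simp only [add_zero, apply_ite C, map_zero, ite_mul, zero_mul] at this
  exact this

theorem coeff_negPart (f : LaurentPolynomial A) (m : ℤ) :
    (negPart f).coeff m = if m < 0 then f.coeff m else 0 := by
  have := coeff_sum_C_mul_T f (fun n a => if n < 0 then a else 0) (fun _ => ite_self 0) 0 m
  simp only [add_zero, apply_ite C, map_zero, ite_mul, zero_mul] at this
  exact this

noncomputable def euler (f : LaurentPolynomial A) : LaurentPolynomial A :=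
  T 1 * wderiv f

theorem coeff_euler (f : LaurentPolynomial A) (m : ℤ) : (euler f).coeff m = m • f.coeff m := by
  rw [euler, T, AddMonoidAlgebra.coeff_single_mul_apply, one_mul, neg_add_eq_sub, coeff_wderiv]

theorem lax_eq_euler (d : A → A) (f g : LaurentPolynomial A) :
    lax d f g = euler f * dmap d g - dmap d f * euler g := by
  rw [lax, euler, euler]; ring

theorem lax_antisymm (d : A → A) (f g : LaurentPolynomial A) : lax d g f = -lax d f g := by
  rw [lax, lax]; ring

theorem euler_add (f g : LaurentPolynomial A) : euler (f + g) = euler f + euler g := by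
  ext m; simp [coeff_euler, smul_add]

theorem dmap_add (d : A → A) (hd_add : ∀ a b, d (a + b) = d a + d b)
    (f g : LaurentPolynomial A) : dmap d (f + g) = dmap d f + dmap d g := by
  have hd0 : d 0 = 0 := by simpa using hd_add 0 0
  ext m; simp [coeff_dmap d hd0, hd_add]

theorem euler_C_mul_T (a : A) (n : ℤ) : euler (C a * T n) = n • (C a * T n) := by
  ext m
  simp only [coeff_euler, ← single_eq_C_mul_T, AddMonoidAlgebra.coeff_single,
    AddMonoidAlgebra.coeff_smul, Finsupp.smul_apply, Finsupp.single_apply]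
  split_ifs with h <;> simp [h]

theorem dmap_C_mul_T (d : A → A) (hd0 : d 0 = 0) (a : A) (n : ℤ) :
    dmap d (C a * T n) = C (d a) * T n := by
  ext m
  simp only [coeff_dmap d hd0, ← single_eq_C_mul_T, AddMonoidAlgebra.coeff_single,
    Finsupp.single_apply]
  split_ifs <;> simp [hd0]

theorem C_mul_T_mul_C_mul_T (a b : A) (n k : ℤ) :
    C a * T n * (C b * T k) = C (a * b) * T (n + k) := by
  rw [map_mul, T_add]; ring

theorem leibniz_of_forall_C_mul_T (D : LaurentPolynomial A → LaurentPolynomial A)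
    (hadd : ∀ f g, D (f + g) = D f + D g)
    (hmono : ∀ a b n k,
      D (C a * T n * (C b * T k)) = C a * T n * D (C b * T k) + D (C a * T n) * (C b * T k))
    (f g : LaurentPolynomial A) : D (f * g) = f * D g + D f * g := by
  induction f using LaurentPolynomial.induction_on' with
  | add p q hp hq => rw [add_mul, hadd, hp, hq, hadd]; ring
  | C_mul_T n a =>
    induction g using LaurentPolynomial.induction_on' with
    | add p q hp hq => rw [mul_add, hadd, hp, hq, hadd]; ring
    | C_mul_T k b => exact hmono a b n k

theorem euler_mul (f g : LaurentPolynomial A) : euler (f * g) = f * euler g + euler f * g :=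
  leibniz_of_forall_C_mul_T euler euler_add (fun a b n k => by
    rw [C_mul_T_mul_C_mul_T, euler_C_mul_T, euler_C_mul_T, euler_C_mul_T, ← C_mul_T_mul_C_mul_T,
      mul_smul_comm, smul_mul_assoc, add_comm n, add_smul]) f g

theorem dmap_mul (d : A → A) (hd_add : ∀ a b, d (a + b) = d a + d b)
    (hd_mul : ∀ a b, d (a * b) = a * d b + d a * b) (f g : LaurentPolynomial A) :
    dmap d (f * g) = f * dmap d g + dmap d f * g := by
  have hd0 : d 0 = 0 := by simpa using hd_add 0 0
  refine leibniz_of_forall_C_mul_T (dmap d) (dmap_add d hd_add) (fun a b n k => ?_) f g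
  simp only [C_mul_T_mul_C_mul_T, dmap_C_mul_T d hd0, hd_mul, map_add, add_mul]

theorem lax_add_left (d : A → A) (hd_add : ∀ a b, d (a + b) = d a + d b)
    (f g h : LaurentPolynomial A) : lax d (f + g) h = lax d f h + lax d g h := by
  simp only [lax_eq_euler, euler_add, dmap_add d hd_add]; ring

theorem lax_mul_left (d : A → A) (hd_add : ∀ a b, d (a + b) = d a + d b)
    (hd_mul : ∀ a b, d (a * b) = a * d b + d a * b) (f g h : LaurentPolynomial A) :
    lax d (f * g) h = f * lax d g h + g * lax d f h := by
  simp only [lax_eq_euler, euler_mul, dmap_mul d hd_add hd_mul]; ring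

theorem lax_pow_succ_left (d : A → A) (hd_add : ∀ a b, d (a + b) = d a + d b)
    (hd_mul : ∀ a b, d (a * b) = a * d b + d a * b) (f h : LaurentPolynomial A) (n : ℕ) :
    lax d (f ^ (n + 1)) h = f ^ n * ((n + 1) • lax d f h) := by
  induction n with
  | zero => simp
  | succ n ih =>
    rw [pow_succ', lax_mul_left d hd_add hd_mul, ih]
    simp only [succ_nsmul, mul_add, pow_succ]
    ring

theorem support_euler_subset (f : LaurentPolynomial A) :
    (euler f).coeff.support ⊆ f.coeff.support := by
  intro m
  simp only [Finsupp.mem_support_iff, coeff_euler]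
  exact fun h hf => h (by rw [hf, smul_zero])

theorem support_dmap_subset (d : A → A) (hd0 : d 0 = 0) (f : LaurentPolynomial A) :
    (dmap d f).coeff.support ⊆ f.coeff.support := by
  intro m
  simp only [Finsupp.mem_support_iff, coeff_dmap d hd0]
  exact fun h hf => h (by rw [hf, hd0])

theorem support_lax_subset (d : A → A) (hd0 : d 0 = 0) (f g : LaurentPolynomial A) :
    (lax d f g).coeff.support ⊆ f.coeff.support + g.coeff.support := by
  classical
  rw [lax_eq_euler, AddMonoidAlgebra.coeff_sub]
  refine (Finsupp.support_sub).trans (Finset.union_subset ?_ ?_)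
  · exact (AddMonoidAlgebra.support_coeff_mul_subset _ _).trans
      (Finset.add_subset_add (support_euler_subset f) (support_dmap_subset d hd0 g))
  · exact (AddMonoidAlgebra.support_coeff_mul_subset _ _).trans
      (Finset.add_subset_add (support_dmap_subset d hd0 f) (support_euler_subset g))

theorem add_le_of_mem_support_lax (d : A → A) (hd0 : d 0 = 0) {f g : LaurentPolynomial A}
    {a b : ℤ} (hf : ∀ m ∈ f.coeff.support, a ≤ m) (hg : ∀ m ∈ g.coeff.support, b ≤ m) :
    ∀ m ∈ (lax d f g).coeff.support, a + b ≤ m := by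
  classical
  intro m hm
  obtain ⟨i, hi, j, hj, rfl⟩ := Finset.mem_add.mp (support_lax_subset d hd0 f g hm)
  exact add_le_add (hf i hi) (hg j hj)

theorem coeff_mul_add_of_le (f g : LaurentPolynomial A) {a b : ℤ}
    (hf : ∀ m ∈ f.coeff.support, a ≤ m) (hg : ∀ m ∈ g.coeff.support, b ≤ m) :
    (f * g).coeff (a + b) = f.coeff a * g.coeff b :=
  AddMonoidAlgebra.coeff_mul_add_of_uniqueAdd fun i j hi hj h => by
    have := hf i hi; have := hg j hj; omega

theorem mul_le_of_mem_support_pow {f : LaurentPolynomial A} {a : ℤ}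
    (hf : ∀ m ∈ f.coeff.support, a ≤ m) (n : ℕ) :
    ∀ m ∈ (f ^ n).coeff.support, n * a ≤ m := by
  classical
  induction n with
  | zero =>
    intro m hm
    rw [pow_zero, ← map_one C, Finsupp.mem_support_iff, C_apply] at hm
    simp_all
  | succ n ih =>
    intro m hm
    rw [pow_succ] at hm
    obtain ⟨i, hi, j, hj, rfl⟩ :=
      Finset.mem_add.mp (AddMonoidAlgebra.support_coeff_mul_subset _ _ hm)
    push_cast
    linarith [ih i hi, hf j hj]

theorem coeff_pow_mul_of_le {f : LaurentPolynomial A} {a : ℤ}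
    (hf : ∀ m ∈ f.coeff.support, a ≤ m) (n : ℕ) :
    (f ^ n).coeff (n * a) = f.coeff a ^ n := by
  induction n with
  | zero => rw [pow_zero, pow_zero, ← map_one C, C_apply, Nat.cast_zero, zero_mul, if_pos rfl]
  | succ n ih =>
    rw [pow_succ, Nat.cast_succ, add_one_mul,
      coeff_mul_add_of_le _ _ (mul_le_of_mem_support_pow hf n) hf, ih, pow_succ]

theorem sub_le_of_mem_support_of_mul [NoZeroDivisors A] {f g : LaurentPolynomial A} {a b : ℤ}
    (hf : ∀ m ∈ f.coeff.support, a ≤ m) (hfa : f.coeff a ≠ 0)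
    (hfg : ∀ m ∈ (f * g).coeff.support, b ≤ m) : ∀ m ∈ g.coeff.support, b - a ≤ m := by
  intro m hm
  set m₀ := g.coeff.support.min' ⟨m, hm⟩
  have hm₀ : g.coeff m₀ ≠ 0 := Finsupp.mem_support_iff.mp (Finset.min'_mem _ _)
  have hcoeff := coeff_mul_add_of_le f g (b := m₀) hf (fun k hk => Finset.min'_le _ k hk)
  have := hfg _ (Finsupp.mem_support_iff.mpr (hcoeff ▸ mul_ne_zero hfa hm₀))
  linarith [Finset.min'_le _ m hm]

theorem mem_support_invert {f : LaurentPolynomial A} {m : ℤ} :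
    m ∈ (invert f).coeff.support ↔ -m ∈ f.coeff.support := by
  simp

theorem euler_invert (f : LaurentPolynomial A) : euler (invert f) = -invert (euler f) := by
  ext m; simp [coeff_euler]

theorem dmap_invert (d : A → A) (hd0 : d 0 = 0) (f : LaurentPolynomial A) :
    dmap d (invert f) = invert (dmap d f) := by
  ext m; simp [coeff_dmap d hd0]

theorem lax_invert (d : A → A) (hd0 : d 0 = 0) (f g : LaurentPolynomial A) :
    lax d (invert f) (invert g) = -invert (lax d f g) := by
  simp only [lax_eq_euler, euler_invert, dmap_invert d hd0, map_sub, map_mul]; ring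

theorem nonneg_of_mem_support_sub_negPart (f : LaurentPolynomial A) (c : A) :
    ∀ m ∈ (f - (negPart f + C c)).coeff.support, 0 ≤ m := by
  intro m hm
  by_contra h
  simp [coeff_negPart, C_apply, not_le.mp h, ne_of_lt (not_le.mp h)] at hm

theorem nonpos_of_mem_support_sub_posPart (f : LaurentPolynomial A) (c : A) :
    ∀ m ∈ (f - (posPart f + C c)).coeff.support, m ≤ 0 := by
  intro m hm
  by_contra h
  simp [coeff_posPart, C_apply, not_le.mp h, ne_of_gt (not_le.mp h)] at hm

theorem nonneg_of_mem_support_lax [NoZeroDivisors A] [CharZero A] (d : A → A)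
    (hd_add : ∀ a b, d (a + b) = d a + d b) (hd_mul : ∀ a b, d (a * b) = a * d b + d a * b)
    {n : ℕ} {z zbar H : LaurentPolynomial A}
    (hz : ∀ m ∈ z.coeff.support, -(n : ℤ) ≤ m)
    (hzbar : ∀ m ∈ zbar.coeff.support, -1 ≤ m) (hzbar1 : zbar.coeff (-1) ≠ 0)
    (hH : ∀ m ∈ (zbar ^ (n + 1) - H).coeff.support, 0 ≤ m)
    (hlow : ∀ m ∈ (lax d H z).coeff.support, -(n : ℤ) ≤ m) :
    ∀ m ∈ (lax d z zbar).coeff.support, 0 ≤ m := by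
  have hd0 : d 0 = 0 := by simpa using hd_add 0 0
  have hpow : ∀ m ∈ (lax d (zbar ^ (n + 1)) z).coeff.support, -(n : ℤ) ≤ m := by
    rw [← add_sub_cancel H (zbar ^ (n + 1)), lax_add_left d hd_add]
    intro m hm
    rcases Finset.mem_union.mp (Finsupp.support_add hm) with h | h
    · exact hlow m h
    · simpa using add_le_of_mem_support_lax d hd0 hH hz m h
  rw [lax_pow_succ_left d hd_add hd_mul] at hpow
  have hlead : (zbar ^ n).coeff (n * -1) ≠ 0 := by
    rw [coeff_pow_mul_of_le hzbar]; exact pow_ne_zero _ hzbar1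
  have key := sub_le_of_mem_support_of_mul (mul_le_of_mem_support_pow hzbar n) hlead hpow
  intro m hm
  have hm' : m ∈ ((n + 1) • lax d zbar z).coeff.support := by
    rw [lax_antisymm, AddMonoidAlgebra.coeff_neg, Finsupp.support_neg] at hm
    rw [Finsupp.mem_support_iff] at hm ⊢
    rw [AddMonoidAlgebra.coeff_smul_apply]
    exact smul_ne_zero n.succ_ne_zero hm
  linarith [key m hm']

theorem nonpos_of_mem_support_lax [NoZeroDivisors A] [CharZero A] (d : A → A)
    (hd_add : ∀ a b, d (a + b) = d a + d b) (hd_mul : ∀ a b, d (a * b) = a * d b + d a * b)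
    {n : ℕ} {z zbar H : LaurentPolynomial A}
    (hz : ∀ m ∈ z.coeff.support, m ≤ 1) (hz1 : z.coeff 1 ≠ 0)
    (hzbar : ∀ m ∈ zbar.coeff.support, m ≤ n)
    (hH : ∀ m ∈ (z ^ (n + 1) - H).coeff.support, m ≤ 0)
    (hhigh : ∀ m ∈ (lax d H zbar).coeff.support, m ≤ n) :
    ∀ m ∈ (lax d z zbar).coeff.support, m ≤ 0 := by
  have hd0 : d 0 = 0 := by simpa using hd_add 0 0
  have := nonneg_of_mem_support_lax d hd_add hd_mul (n := n) (z := invert zbar) (zbar := invert z)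
    (H := invert H) (fun m hm => by linarith [hzbar _ (mem_support_invert.mp hm)])
    (fun m hm => by linarith [hz _ (mem_support_invert.mp hm)]) (by simpa using hz1)
    (fun m hm => by
      rw [← map_pow, ← map_sub, mem_support_invert] at hm
      linarith [hH _ hm])
    (fun m hm => by
      rw [lax_invert d hd0, AddMonoidAlgebra.coeff_neg, Finsupp.support_neg,
        mem_support_invert] at hm
      linarith [hhigh _ hm])
  intro m hm
  have := this (-m) (by
    rwa [lax_invert d hd0, ← map_neg, ← lax_antisymm, mem_support_invert, neg_neg])
  linarith

end LaurentPolynomial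

theorem string_equation_necessary_general {A : Type*} [CommRing A] [IsDomain A] [Algebra ℚ A]
    (d : A → A)
    (hd_add : ∀ a b : A, d (a + b) = d a + d b)
    (hd_mul : ∀ a b : A, d (a * b) = a * d b + d a * b)
    (N : ℕ)
    (z zbar : LaurentPolynomial A)
    (hz : z.coeff.support ⊆ Finset.Icc (-(N : ℤ)) 1)
    (hzbar : zbar.coeff.support ⊆ Finset.Icc (-1 : ℤ) (N : ℤ))
    (hz1 : z.coeff (1 : ℤ) ≠ 0)
    (hzbar1 : zbar.coeff (-1 : ℤ) ≠ 0)
    (HN1 HbN1 : LaurentPolynomial A)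
    (hHN1 : HN1 = posPart (z ^ (N + 1)) + C ((1/2 : ℚ) • ((z ^ (N + 1)).coeff (0 : ℤ))))
    (hHbN1 : HbN1 = negPart (zbar ^ (N + 1)) + C ((1/2 : ℚ) • ((zbar ^ (N + 1)).coeff (0 : ℤ))))
    (hlow : ∀ m ∈ (lax d HbN1 z).coeff.support, -(N : ℤ) ≤ m)
    (hhigh : ∀ m ∈ (lax d HN1 zbar).coeff.support, m ≤ (N : ℤ)) :
    (lax d z zbar).coeff.support ⊆ {0} := by
  have : CharZero A := charZero_of_injective_algebraMap (algebraMap ℚ A).injective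
  subst hHN1 hHbN1
  have hnonneg := nonneg_of_mem_support_lax d hd_add hd_mul
    (fun m hm => (Finset.mem_Icc.mp (hz hm)).1) (fun m hm => (Finset.mem_Icc.mp (hzbar hm)).1)
    hzbar1 (nonneg_of_mem_support_sub_negPart _ _) hlow
  have hnonpos := nonpos_of_mem_support_lax d hd_add hd_mul
    (fun m hm => (Finset.mem_Icc.mp (hz hm)).2) hz1 (fun m hm => (Finset.mem_Icc.mp (hzbar hm)).2)
    (nonpos_of_mem_support_sub_posPart _ _) hhigh
  exact fun m hm => Finset.mem_singleton.mpr (le_antisymm (hnonpos m hm) (hnonneg m hm))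

/-- necessity of the string equation. If the coefficient of `w¹` in `z`
and of `w⁻¹` in `z̄` are nonzero and the brackets `{H̄_{N+1}, z}`, `{H_{N+1}, z̄}`
respect the lower/upper degree bounds of the polynomial reduction, then `{z, z̄}`
has support in `{0}`, i.e. `{z, z̄}` is independent of `w`. -/
theorem string_equation_necessary {A : Type*} [CommRing A] [IsDomain A] [Algebra ℚ A]
    (d : A → A)
    (hd_add : ∀ a b : A, d (a + b) = d a + d b)
    (hd_mul : ∀ a b : A, d (a * b) = a * d b + d a * b)
    (N : ℕ) (hN : 1 ≤ N)
    (z zbar : LaurentPolynomial A)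
    (hz : z.coeff.support ⊆ Finset.Icc (-(N : ℤ)) 1)
    (hzbar : zbar.coeff.support ⊆ Finset.Icc (-1 : ℤ) (N : ℤ))
    (hz1 : z.coeff (1 : ℤ) ≠ 0)
    (hzbar1 : zbar.coeff (-1 : ℤ) ≠ 0)
    (HN1 HbN1 : LaurentPolynomial A)
    (hHN1 : HN1 = posPart (z ^ (N + 1)) + C ((1/2 : ℚ) • ((z ^ (N + 1)).coeff (0 : ℤ))))
    (hHbN1 : HbN1 = negPart (zbar ^ (N + 1)) + C ((1/2 : ℚ) • ((zbar ^ (N + 1)).coeff (0 : ℤ))))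
    (hlow : ∀ m ∈ (lax d HbN1 z).coeff.support, -(N : ℤ) ≤ m)
    (hhigh : ∀ m ∈ (lax d HN1 zbar).coeff.support, m ≤ (N : ℤ)) :
    (lax d z zbar).coeff.support ⊆ {0} :=
  string_equation_necessary_general d hd_add hd_mul N z zbar hz hzbar hz1 hzbar1 HN1 HbN1 hHN1 hHbN1
    hlow hhigh
end
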